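/- arXiv:2107.01039 — 3 statements merged into one kernel-verified Lean document; each statement's English description precedes it below -/
import Mathlib

section
/- Suppose f ∈ L¹_loc(ℝ) admits a modulus of growth ω with ω(0+) = 0, i.e. ess sup_x [f(x+h) − f(x)] ≤ ω(h) for all h > 0 where ω: (0,∞) → (0,∞) is increasing with lim_{h→0⁺} ω(h) = 0. Then f admits an essential left limit and an essential right limit at every point x ∈ ℝ; in particular f coincides almost everywhere with a left-continuous function and also with a right-continuous function. -/
/-!
By Fubini, for a.e. `x` the bound `f y ≤ f x + ω (y - x)` holds for a.e. `y > x` and, for a.e. `y`,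
for a.e. `x < y`. Passing through a common intermediate point gives
`f y ≤ f x + 2 ω (y - x)` for all `x < y` in a conull, hence dense, set `G` (for a measurable
representative of `f`). Such an "almost decreasing" function has one-sided limits `L` and `R` along
`G`; they are left- resp. right-continuous, satisfy `R ≤ f ≤ L` on `G`, and
`L b ≤ R a + 2 ω (b - a)` for `a < b`, which allows `R < L` only at countably many points.
-/

open MeasureTheory Filter Topology Set

def HasGrowthModulusOn (g W : ℝ → ℝ) (G : Set ℝ) : Prop :=
  ∀ x ∈ G, ∀ y ∈ G, x < y → g y ≤ g x + W (y - x)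

theorem Dense.nhdsWithin_inter_Iio_neBot {α : Type*} [TopologicalSpace α] [LinearOrder α]
    [OrderTopology α] [DenselyOrdered α] [NoMinOrder α] {G : Set α} (hG : Dense G) (x : α) :
    (𝓝[G ∩ Iio x] x).NeBot := by
  rw [← mem_closure_iff_nhdsWithin_neBot, inter_comm]
  exact closure_minimal (hG.open_subset_closure_inter isOpen_Iio) isClosed_closure
    (closure_Iio x ▸ self_mem_Iic)

theorem Dense.nhdsWithin_inter_Ioi_neBot {α : Type*} [TopologicalSpace α] [LinearOrder α]
    [OrderTopology α] [DenselyOrdered α] [NoMaxOrder α] {G : Set α} (hG : Dense G) (x : α) :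
    (𝓝[G ∩ Ioi x] x).NeBot :=
  hG.nhdsWithin_inter_Iio_neBot (α := αᵒᵈ) x

theorem continuousWithinAt_Iic_of_tendsto {α β : Type*} [TopologicalSpace α] [LinearOrder α]
    [TopologicalSpace β] [RegularSpace β] {g L : α → β} {G : Set α}
    (hG : ∀ y, (𝓝[G ∩ Iio y] y).NeBot) (hL : ∀ y, Tendsto g (𝓝[G ∩ Iio y] y) (𝓝 (L y)))
    (x : α) : ContinuousWithinAt L (Iic x) x := by
  rw [ContinuousWithinAt, (closed_nhds_basis (L x)).tendsto_right_iff]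
  rintro V ⟨hV, hVc⟩
  obtain ⟨u, hu, hxu, hgu⟩ := mem_nhdsWithin.mp (hL x hV)
  filter_upwards [mem_nhdsWithin_of_mem_nhds (hu.mem_nhds hxu), self_mem_nhdsWithin]
    with y hyu hyx
  rcases (mem_Iic.mp hyx).lt_or_eq with hyx | rfl
  · have := hG y
    refine hVc.mem_of_tendsto (hL y) (mem_nhdsWithin.mpr ⟨u, hu, hyu, ?_⟩)
    exact fun z ⟨hzu, hzG, hzy⟩ => hgu ⟨hzu, hzG, hzy.trans hyx⟩
  · exact mem_of_mem_nhds hV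

lemma eventually_nhdsWithin_Iio_mem_Ioo {G : Set ℝ} {x z : ℝ} (hz : z < x) :
    ∀ᶠ y in 𝓝[G ∩ Iio x] x, y ∈ G ∧ y ∈ Ioo z x := by
  filter_upwards [nhdsWithin_mono _ inter_subset_right (Ioo_mem_nhdsLT hz),
    self_mem_nhdsWithin] with y hyz hyG using ⟨hyG.1, hyz⟩

lemma eventually_nhdsWithin_Ioi_mem_Ioo {G : Set ℝ} {x z : ℝ} (hz : x < z) :
    ∀ᶠ y in 𝓝[G ∩ Ioi x] x, y ∈ G ∧ y ∈ Ioo x z := by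
  filter_upwards [nhdsWithin_mono _ inter_subset_right (Ioo_mem_nhdsGT hz),
    self_mem_nhdsWithin] with y hyz hyG using ⟨hyG.1, hyz⟩

lemma exists_forall_Ioo_lt_of_tendsto_nhdsGT {W : ℝ → ℝ} (hW0 : Tendsto W (𝓝[>] 0) (𝓝 0))
    {ε : ℝ} (hε : 0 < ε) : ∃ δ > 0, ∀ t ∈ Ioo 0 δ, W t < ε := by
  obtain ⟨δ, hδ, hsub⟩ := mem_nhdsGT_iff_exists_Ioo_subset.mp (hW0 (Iio_mem_nhds hε))
  exact ⟨δ, hδ, fun t ht => hsub ht⟩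

lemma le_of_forall_le_add_of_tendsto_nhdsGT {W : ℝ → ℝ} (hW0 : Tendsto W (𝓝[>] 0) (𝓝 0))
    {a b : ℝ} (hab : ∀ δ > 0, a ≤ b + W δ) : a ≤ b := by
  simpa using ge_of_tendsto (tendsto_const_nhds.add hW0) (eventually_mem_nhdsWithin.mono hab)

lemma monotone_indicator_Ioi_zero {ω : ℝ → ℝ} (hmono : MonotoneOn ω (Ioi 0))
    (hpos : ∀ t > 0, 0 < ω t) : Monotone ((Ioi 0).indicator ω) := by
  intro a b hab
  by_cases hb : 0 < b
  · rw [indicator_of_mem (show b ∈ Ioi 0 from hb)]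
    by_cases ha : 0 < a
    · rw [indicator_of_mem (show a ∈ Ioi 0 from ha)]
      exact hmono ha hb hab
    · rw [indicator_of_notMem (show a ∉ Ioi 0 from ha)]
      exact (hpos b hb).le
  · rw [indicator_of_notMem (show b ∉ Ioi 0 from hb),
      indicator_of_notMem (show a ∉ Ioi 0 from fun ha => hb (lt_of_lt_of_le ha hab))]

lemma countable_setOf_lt_of_le_add {u v W : ℝ → ℝ}
    (hW0 : Tendsto W (𝓝[>] 0) (𝓝 0)) (h : ∀ a b, a < b → v b ≤ u a + W (b - a)) :
    {x | u x < v x}.Countable := by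
  have hsub : {x | u x < v x} ⊆ ⋃ p : ℚ, ⋃ q : ℚ, {x | u x < p ∧ (p : ℝ) < q ∧ q < v x} := by
    intro x (hx : u x < v x)
    obtain ⟨p, hup, hpv⟩ := exists_rat_btwn hx
    obtain ⟨q, hpq, hqv⟩ := exists_rat_btwn hpv
    exact mem_iUnion₂.mpr ⟨p, q, hup, hpq, hqv⟩
  refine .mono hsub (countable_iUnion fun p => countable_iUnion fun q => ?_)
  set S := {x | u x < p ∧ (p : ℝ) < q ∧ q < v x}
  -- two points of `S` closer than `δ` would force `v ≤ u + (q - p)` across the gap `p < q`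
  refine (countable_setOfPred_isolated_right_within (s := S)).mono fun x hx => ?_
  refine ⟨hx, ?_⟩
  obtain ⟨δ, hδ, hWδ⟩ := exists_forall_Ioo_lt_of_tendsto_nhdsGT hW0 (sub_pos.mpr hx.2.1)
  refine inf_principal_eq_bot.mpr (mem_of_superset (Iio_mem_nhds (lt_add_of_pos_right x hδ)) ?_)
  rintro y hyδ ⟨⟨-, -, hqy⟩, hxy⟩
  linarith [h x y hxy, hWδ (y - x) ⟨sub_pos.mpr hxy, by linarith [mem_Iio.mp hyδ]⟩, hx.1]

section GoodSet

variable {f W : ℝ → ℝ}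

theorem ae_ae_le_add_of_forall_ae (hf : Measurable f) (hW : Measurable W)
    (h : ∀ t > 0, ∀ᵐ x, f (x + t) ≤ f x + W t) :
    ∀ᵐ x, ∀ᵐ y, x < y → f y ≤ f x + W (y - x) := by
  have hmeas : MeasurableSet {p : ℝ × ℝ | 0 < p.2 → f (p.1 + p.2) ≤ f p.1 + W p.2} :=
    (measurableSet_lt measurable_const measurable_snd).imp
      (measurableSet_le (by fun_prop) (by fun_prop))
  have hswap : ∀ᵐ x, ∀ᵐ t, 0 < t → f (x + t) ≤ f x + W t :=
    (Measure.ae_ae_comm hmeas).mpr (ae_of_all _ fun t => eventually_imp_distrib_left.mpr (h t))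
  filter_upwards [hswap] with x hx
  filter_upwards [(measurePreserving_sub_right volume x).quasiMeasurePreserving.ae hx]
    with y hy hxy
  simpa using hy (sub_pos.mpr hxy)

theorem exists_ae_mem_hasGrowthModulusOn (hf : Measurable f) (hW : Measurable W)
    (hWmono : MonotoneOn W (Ioi 0)) (h : ∀ t > 0, ∀ᵐ x, f (x + t) ≤ f x + W t) :
    ∃ G : Set ℝ, (∀ᵐ x, x ∈ G) ∧ HasGrowthModulusOn f (fun t => 2 * W t) G := by
  have hmeas : MeasurableSet {p : ℝ × ℝ | p.1 < p.2 → f p.2 ≤ f p.1 + W (p.2 - p.1)} :=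
    (measurableSet_lt measurable_fst measurable_snd).imp
      (measurableSet_le (by fun_prop) (by fun_prop))
  have hfwd := ae_ae_le_add_of_forall_ae hf hW h
  have hbwd := (Measure.ae_ae_comm hmeas).mp hfwd
  refine ⟨{x | (∀ᵐ y, x < y → f y ≤ f x + W (y - x)) ∧ ∀ᵐ y, y < x → f x ≤ f y + W (x - y)},
    hfwd.and hbwd, ?_⟩
  rintro x hx y hy hxy
  obtain ⟨z, ⟨hxz, hzy⟩, hz⟩ := Measure.exists_mem_of_measure_ne_zero_of_ae (s := Ioo x y)
    (by simp [hxy]) (ae_restrict_of_ae (hx.1.and hy.2))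
  have hWx : W (z - x) ≤ W (y - x) :=
    hWmono (sub_pos.mpr hxz) (sub_pos.mpr hxy) (by linarith)
  have hWy : W (y - z) ≤ W (y - x) :=
    hWmono (sub_pos.mpr hzy) (sub_pos.mpr hxy) (by linarith)
  linarith [hz.1 hxz, hz.2 hzy]

theorem exists_ae_eq_hasGrowthModulusOn (hf : AEMeasurable f) (hW : Measurable W)
    (hWmono : MonotoneOn W (Ioi 0)) (h : ∀ t > 0, ∀ᵐ x, f (x + t) - f x ≤ W t) :
    ∃ f₀, f =ᵐ[volume] f₀ ∧
      ∃ G, (∀ᵐ x, x ∈ G) ∧ HasGrowthModulusOn f₀ (fun t => 2 * W t) G := by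
  refine ⟨hf.mk f, hf.ae_eq_mk,
    exists_ae_mem_hasGrowthModulusOn hf.measurable_mk hW hWmono fun t ht => ?_⟩
  filter_upwards [h t ht, hf.ae_eq_mk,
    (measurePreserving_add_right volume t).quasiMeasurePreserving.ae hf.ae_eq_mk]
    with x hx hfx hfxt
  rw [← hfx, ← hfxt]
  linarith

end GoodSet

lemma exists_pos_ae_abs_sub_lt_of_tendsto {f g : ℝ → ℝ} {G s : Set ℝ} {x L ε : ℝ}
    (hG : ∀ᵐ y, y ∈ G) (hfg : f =ᵐ[volume] g) (h : Tendsto g (𝓝[G ∩ s] x) (𝓝 L)) (hε : 0 < ε) :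
    ∃ δ > 0, ∀ᵐ y, y ∈ s ∩ Ioo (x - δ) (x + δ) → |f y - L| < ε := by
  obtain ⟨δ, hδ, hg⟩ := Metric.tendsto_nhdsWithin_nhds.mp h ε hε
  refine ⟨δ, hδ, ?_⟩
  filter_upwards [hG, hfg] with y hyG hfgy ⟨hys, hyx⟩
  rw [hfgy]
  exact hg ⟨hyG, hys⟩ (by rwa [← Real.ball_eq_Ioo, Metric.mem_ball] at hyx)

namespace HasGrowthModulusOn

variable {g W : ℝ → ℝ} {G : Set ℝ}

lemma neg_comp_neg (h : HasGrowthModulusOn g W G) :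
    HasGrowthModulusOn (fun t => -g (-t)) W (-G) := by
  intro s hs t ht hst
  have := h (-t) ht (-s) hs (neg_lt_neg hst)
  rw [neg_sub_neg] at this
  linarith

lemma exists_eventually_mem_Icc_nhdsWithin_Iio (h : HasGrowthModulusOn g W G) (hG : Dense G)
    (hW : MonotoneOn W (Ioi 0)) (x : ℝ) :
    ∃ m M, ∀ᶠ z in 𝓝[G ∩ Iio x] x, g z ∈ Icc m M := by
  obtain ⟨a, haG, hax⟩ := hG.exists_lt x
  obtain ⟨b, hbG, hxb⟩ := hG.exists_gt x
  refine ⟨g b - W (b - a), g a + W (x - a), ?_⟩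
  filter_upwards [eventually_nhdsWithin_Iio_mem_Ioo hax] with z ⟨hzG, haz, hzx⟩
  have hWb : W (b - z) ≤ W (b - a) :=
    hW (sub_pos.mpr (hzx.trans hxb)) (sub_pos.mpr (hax.trans hxb)) (by linarith)
  have hWa : W (z - a) ≤ W (x - a) := hW (sub_pos.mpr haz) (sub_pos.mpr hax) (by linarith)
  constructor <;> linarith [h z hzG b hbG (hzx.trans hxb), h a haG z hzG haz]

theorem exists_tendsto_nhdsWithin_Iio (h : HasGrowthModulusOn g W G) (hG : Dense G)
    (hW : MonotoneOn W (Ioi 0)) (hW0 : Tendsto W (𝓝[>] 0) (𝓝 0)) (x : ℝ) :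
    ∃ L, Tendsto g (𝓝[G ∩ Iio x] x) (𝓝 L) := by
  have := hG.nhdsWithin_inter_Iio_neBot x
  obtain ⟨m, M, hmM⟩ := h.exists_eventually_mem_Icc_nhdsWithin_Iio hG hW x
  have hbdd : IsBoundedUnder (· ≥ ·) (𝓝[G ∩ Iio x] x) g :=
    isBoundedUnder_of_eventually_ge (hmM.mono fun _ hz => hz.1)
  have hcobdd : IsCoboundedUnder (· ≥ ·) (𝓝[G ∩ Iio x] x) g :=
    isCoboundedUnder_ge_of_eventually_le _ (hmM.mono fun _ hz => hz.2)
  refine ⟨liminf g (𝓝[G ∩ Iio x] x), tendsto_order.mpr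
    ⟨fun c hc => eventually_lt_of_lt_liminf hc hbdd, fun c hc => ?_⟩⟩
  -- a value of `g` close to the liminf bounds all later values on the left of `x`
  set L := liminf g (𝓝[G ∩ Iio x] x)
  obtain ⟨δ, hδ, hWδ⟩ := exists_forall_Ioo_lt_of_tendsto_nhdsGT hW0 (half_pos (sub_pos.mpr hc))
  obtain ⟨z, hgz, hzG, hδz, hzx⟩ := ((frequently_lt_of_liminf_lt hcobdd
    (show L < (L + c) / 2 by linarith)).and_eventually
      (eventually_nhdsWithin_Iio_mem_Ioo (sub_lt_self x hδ))).exists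
  filter_upwards [eventually_nhdsWithin_Iio_mem_Ioo hzx] with y ⟨hyG, hzy, hyx⟩
  linarith [h z hzG y hyG hzy, hWδ (y - z) ⟨sub_pos.mpr hzy, by linarith⟩]

theorem exists_tendsto_nhdsWithin_Ioi (h : HasGrowthModulusOn g W G) (hG : Dense G)
    (hW : MonotoneOn W (Ioi 0)) (hW0 : Tendsto W (𝓝[>] 0) (𝓝 0)) (x : ℝ) :
    ∃ L, Tendsto g (𝓝[G ∩ Ioi x] x) (𝓝 L) := by
  obtain ⟨L, hL⟩ := h.neg_comp_neg.exists_tendsto_nhdsWithin_Iio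
    (hG.preimage (Homeomorph.neg ℝ).isOpenMap) hW hW0 (-x)
  have hneg : Tendsto Neg.neg (𝓝[G ∩ Ioi x] x) (𝓝[-G ∩ Iio (-x)] (-x)) :=
    continuous_neg.continuousWithinAt.tendsto_nhdsWithin
      fun t ⟨htG, hxt⟩ => ⟨by simpa using htG, neg_lt_neg (a := x) hxt⟩
  refine ⟨-L, (hL.comp hneg).neg.congr fun t => ?_⟩
  simp

lemma le_add_of_tendsto (h : HasGrowthModulusOn g W G) {la lb : Filter ℝ} [la.NeBot] [lb.NeBot]
    {A B c : ℝ} (hA : Tendsto g la (𝓝 A)) (hB : Tendsto g lb (𝓝 B))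
    (hc : ∀ᶠ w in la, w ∈ G ∧ ∀ᶠ z in lb, z ∈ G ∧ w < z ∧ W (z - w) ≤ c) : B ≤ A + c :=
  ge_of_tendsto (hA.add_const c) <| hc.mono fun w ⟨hwG, hz⟩ => le_of_tendsto hB <|
    hz.mono fun z ⟨hzG, hwz, hWc⟩ => (h w hwG z hzG hwz).trans (by linarith)

lemma le_add_of_tendsto_Iio_of_tendsto_Ioi (h : HasGrowthModulusOn g W G) (hG : Dense G)
    (hW : MonotoneOn W (Ioi 0)) {a b L R : ℝ} (hab : a < b)
    (hL : Tendsto g (𝓝[G ∩ Iio b] b) (𝓝 L)) (hR : Tendsto g (𝓝[G ∩ Ioi a] a) (𝓝 R)) :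
    L ≤ R + W (b - a) := by
  have := hG.nhdsWithin_inter_Iio_neBot b
  have := hG.nhdsWithin_inter_Ioi_neBot a
  obtain ⟨m, ham, hmb⟩ := exists_between hab
  refine h.le_add_of_tendsto hR hL ?_
  filter_upwards [eventually_nhdsWithin_Ioi_mem_Ioo ham] with w ⟨hwG, haw, hwm⟩
  refine ⟨hwG, ?_⟩
  filter_upwards [eventually_nhdsWithin_Iio_mem_Ioo hmb] with z ⟨hzG, hmz, hzb⟩
  have hwz : w < z := hwm.trans hmz
  exact ⟨hzG, hwz, hW (sub_pos.mpr hwz) (sub_pos.mpr hab) (by linarith)⟩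

lemma le_of_tendsto_nhdsWithin_Iio (h : HasGrowthModulusOn g W G) (hG : Dense G)
    (hW : MonotoneOn W (Ioi 0)) (hW0 : Tendsto W (𝓝[>] 0) (𝓝 0)) {x L : ℝ}
    (hL : Tendsto g (𝓝[G ∩ Iio x] x) (𝓝 L)) (hx : x ∈ G) : g x ≤ L := by
  have := hG.nhdsWithin_inter_Iio_neBot x
  refine le_of_forall_le_add_of_tendsto_nhdsGT hW0 fun δ hδ =>
    h.le_add_of_tendsto hL (tendsto_pure_nhds g x) ?_
  filter_upwards [eventually_nhdsWithin_Iio_mem_Ioo (sub_lt_self x hδ)] with w ⟨hwG, hδw, hwx⟩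
  exact ⟨hwG, hx, hwx, hW (sub_pos.mpr hwx) hδ (by linarith)⟩

lemma ge_of_tendsto_nhdsWithin_Ioi (h : HasGrowthModulusOn g W G) (hG : Dense G)
    (hW : MonotoneOn W (Ioi 0)) (hW0 : Tendsto W (𝓝[>] 0) (𝓝 0)) {x R : ℝ}
    (hR : Tendsto g (𝓝[G ∩ Ioi x] x) (𝓝 R)) (hx : x ∈ G) : R ≤ g x := by
  have := hG.nhdsWithin_inter_Ioi_neBot x
  refine le_of_forall_le_add_of_tendsto_nhdsGT hW0 fun δ hδ =>
    h.le_add_of_tendsto (tendsto_pure_nhds g x) hR (eventually_pure.mpr ⟨hx, ?_⟩)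
  filter_upwards [eventually_nhdsWithin_Ioi_mem_Ioo (lt_add_of_pos_right x hδ)]
    with z ⟨hzG, hxz, hzδ⟩
  exact ⟨hzG, hxz, hW (sub_pos.mpr hxz) hδ (by linarith)⟩

theorem ae_eq_of_tendsto (h : HasGrowthModulusOn g W G) (hGae : ∀ᵐ x, x ∈ G)
    (hW : MonotoneOn W (Ioi 0)) (hW0 : Tendsto W (𝓝[>] 0) (𝓝 0)) {L R : ℝ → ℝ}
    (hL : ∀ x, Tendsto g (𝓝[G ∩ Iio x] x) (𝓝 (L x)))
    (hR : ∀ x, Tendsto g (𝓝[G ∩ Ioi x] x) (𝓝 (R x))) : ∀ᵐ x, L x = g x ∧ R x = g x := by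
  have hG : Dense G := Measure.dense_of_ae hGae
  have hjumps := countable_setOf_lt_of_le_add hW0 fun a b hab =>
    h.le_add_of_tendsto_Iio_of_tendsto_Ioi hG hW hab (hL b) (hR a)
  filter_upwards [hGae, hjumps.ae_notMem volume] with x hxG hx
  have hgL := h.le_of_tendsto_nhdsWithin_Iio hG hW hW0 (hL x) hxG
  have hRg := h.ge_of_tendsto_nhdsWithin_Ioi hG hW hW0 (hR x) hxG
  have hLR : L x ≤ R x := not_lt.mp hx
  constructor <;> linarith

end HasGrowthModulusOn

theorem essential_limits_of_modulus_of_growth (f : ℝ → ℝ)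
    (hf : LocallyIntegrable f volume)
    (ω : ℝ → ℝ) (hmono : StrictMonoOn ω (Set.Ioi 0)) (hpos : ∀ h > 0, 0 < ω h)
    (h0 : Filter.Tendsto ω (nhdsWithin 0 (Set.Ioi 0)) (nhds 0))
    (hbound : ∀ h > 0, ∀ᵐ x ∂(volume : Measure ℝ), f (x + h) - f x ≤ ω h) :
    (∀ x : ℝ, ∃ L : ℝ, ∀ ε > 0, ∃ δ > 0,
      ∀ᵐ y ∂(volume : Measure ℝ), y ∈ Set.Ioo (x - δ) x → |f y - L| < ε) ∧
    (∀ x : ℝ, ∃ L : ℝ, ∀ ε > 0, ∃ δ > 0,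
      ∀ᵐ y ∂(volume : Measure ℝ), y ∈ Set.Ioo x (x + δ) → |f y - L| < ε) ∧
    (∃ g : ℝ → ℝ, (∀ x, ContinuousWithinAt g (Set.Iic x) x) ∧ g =ᵐ[volume] f) ∧
    (∃ g : ℝ → ℝ, (∀ x, ContinuousWithinAt g (Set.Ici x) x) ∧ g =ᵐ[volume] f) := by
  set V := (Ioi (0 : ℝ)).indicator ω
  have hV : Monotone V := monotone_indicator_Ioi_zero hmono.monotoneOn hpos
  have hboundV : ∀ t > 0, ∀ᵐ x, f (x + t) - f x ≤ V t := fun t ht => by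
    rw [show V t = ω t from indicator_of_mem ht ω]
    exact hbound t ht
  obtain ⟨f₀, hff₀, G, hGae, hgrowth⟩ := exists_ae_eq_hasGrowthModulusOn
    hf.aestronglyMeasurable.aemeasurable hV.measurable (hV.monotoneOn _) hboundV
  have hG : Dense G := Measure.dense_of_ae hGae
  have hW : MonotoneOn (fun t => 2 * V t) (Ioi 0) := (hV.const_mul zero_le_two).monotoneOn _
  have hW0 : Tendsto (fun t => 2 * V t) (𝓝[>] 0) (𝓝 0) := by
    simpa using (h0.congr' eqOn_indicator.eventuallyEq_nhdsWithin.symm).const_mul 2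
  choose L hL using hgrowth.exists_tendsto_nhdsWithin_Iio hG hW hW0
  choose R hR using hgrowth.exists_tendsto_nhdsWithin_Ioi hG hW hW0
  have hLR := hgrowth.ae_eq_of_tendsto hGae hW hW0 hL hR
  refine ⟨fun x => ⟨L x, fun ε hε => ?_⟩, fun x => ⟨R x, fun ε hε => ?_⟩,
    ⟨L, continuousWithinAt_Iic_of_tendsto hG.nhdsWithin_inter_Iio_neBot hL,
      EventuallyEq.trans (hLR.mono fun _ hx => hx.1) hff₀.symm⟩,
    ⟨R, continuousWithinAt_Iic_of_tendsto (α := ℝᵒᵈ) hG.nhdsWithin_inter_Ioi_neBot hR,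
      EventuallyEq.trans (hLR.mono fun _ hx => hx.2) hff₀.symm⟩⟩
  · obtain ⟨δ, hδ, hy⟩ := exists_pos_ae_abs_sub_lt_of_tendsto hGae hff₀ (hL x) hε
    exact ⟨δ, hδ, hy.mono fun y hy hyx => hy ⟨hyx.2, hyx.1, by linarith [hyx.2]⟩⟩
  · obtain ⟨δ, hδ, hy⟩ := exists_pos_ae_abs_sub_lt_of_tendsto hGae hff₀ (hR x) hε
    exact ⟨δ, hδ, hy.mono fun y hy hyx => hy ⟨hyx.1, by linarith [hyx.1], hyx.2⟩⟩
end

section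
/- Let s ∈ [0,1] and K ∈ L¹(ℝ) with |K|_{TV^s} < ∞. Suppose v ∈ L^∞(ℝ) admits a modulus of growth ω. Then for any ε > 0 the function w = v + ε K∗v admits the modulus of growth h ↦ ω(h) + ε |K|_{TV^s} |v|_∞ h^s, where |v|_∞ = ess sup_{x,y} (v(x) − v(y))/2. -/
open MeasureTheory Real
open scoped ENNReal

/-- The fractional variation seminorm `|K|_{TV^s}` (possibly `+∞`). -/
noncomputable def fracTV (K : ℝ → ℝ) (s : ℝ) : ℝ≥0∞ :=
  ⨆ (h : ℝ) (_ : 0 < h),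
    eLpNorm (fun x => K (x + h) - K x) 1 volume / ENNReal.ofReal (h ^ s)

/-- Convolution of two real functions. -/
noncomputable def conv (K f : ℝ → ℝ) : ℝ → ℝ := fun x => ∫ y : ℝ, K (x - y) * f y

/-!
Since `∫ (K(· + h) - K) = 0`, the increment `K∗v(x + h) - K∗v(x)` is unchanged when `v` is
replaced by `v - k` for a constant `k`. For `k` the midpoint of the essential range of `v`,
`‖v - k‖_∞ = (ess sup v - ess inf v) / 2`, and the L¹–L^∞ bound together with
`‖K(· + h) - K‖_{L¹} ≤ |K|_{TV^s} h^s` bounds the increment by `|K|_{TV^s} |v|_∞ h^s`.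
-/

section EssentialRange

variable {α : Type*} [MeasurableSpace α] {μ : Measure α} {v : α → ℝ}

theorem MeasureTheory.MemLp.isBoundedUnder_abs (hv : MemLp v ∞ μ) :
    Filter.IsBoundedUnder (· ≤ ·) (ae μ) fun x => |v x| := by
  obtain ⟨C, hC⟩ := eLpNormEssSup_lt_top_iff_isBoundedUnder.mp
    (by simpa only [eLpNorm_exponent_top] using hv.eLpNorm_lt_top)
  refine ⟨C, Filter.eventually_map.mpr ?_⟩
  filter_upwards [Filter.eventually_map.mp hC] with x hx
  simpa only [← Real.norm_eq_abs, ← coe_nnnorm, NNReal.coe_le_coe] using hx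

theorem MeasureTheory.MemLp.ae_abs_sub_midpoint_le (hv : MemLp v ∞ μ) :
    ∀ᵐ x ∂μ,
      |v x - (essSup v μ + essInf v μ) / 2| ≤ (essSup v μ - essInf v μ) / 2 := by
  obtain ⟨hle, hge⟩ := Filter.isBoundedUnder_le_abs.mp hv.isBoundedUnder_abs
  filter_upwards [ae_le_essSup hle, ae_essInf_le hge] with x hsup hinf
  rw [abs_le]
  constructor <;> linarith

end EssentialRange

theorem abs_integral_mul_le_integral_abs_mul {α : Type*} [MeasurableSpace α] {μ : Measure α}
    {F g : α → ℝ} {M : ℝ} (hF : Integrable F μ) (hg : ∀ᵐ x ∂μ, |g x| ≤ M) :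
    |∫ x, F x * g x ∂μ| ≤ (∫ x, |F x| ∂μ) * M := by
  calc |∫ x, F x * g x ∂μ| ≤ ∫ x, |F x * g x| ∂μ := abs_integral_le_integral_abs
    _ ≤ ∫ x, |F x| * M ∂μ := by
      refine integral_mono_of_nonneg (.of_forall fun x => abs_nonneg _) (hF.abs.mul_const M) ?_
      filter_upwards [hg] with x hx
      rw [abs_mul]
      exact mul_le_mul_of_nonneg_left hx (abs_nonneg _)
    _ = (∫ x, |F x| ∂μ) * M := integral_mul_const M _

section Translates

variable {K : ℝ → ℝ} {h : ℝ}

theorem integral_abs_translate_sub_le_fracTV {s : ℝ} (hK : Integrable K)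
    (hfin : fracTV K s ≠ ⊤) (hh : 0 < h) :
    ∫ z, |K (z + h) - K z| ≤ (fracTV K s).toReal * h ^ s := by
  have hhs : 0 < h ^ s := rpow_pos_of_pos hh s
  have hle : eLpNorm (fun z => K (z + h) - K z) 1 volume ≤ fracTV K s * ENNReal.ofReal (h ^ s) :=
    (ENNReal.div_le_iff (ENNReal.ofReal_pos.mpr hhs).ne' ENNReal.ofReal_ne_top).mp
      (le_iSup₂ (f := fun (h : ℝ) (_ : 0 < h) =>
        eLpNorm (fun z => K (z + h) - K z) 1 volume / ENNReal.ofReal (h ^ s)) h hh)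
  have hint : Integrable fun z => K (z + h) - K z := (hK.comp_add_right h).sub hK
  rw [eLpNorm_one_eq_lintegral_enorm, ← ofReal_integral_norm_eq_lintegral_enorm hint,
    ENNReal.ofReal_le_iff_le_toReal (ENNReal.mul_ne_top hfin ENNReal.ofReal_ne_top),
    ENNReal.toReal_mul, ENNReal.toReal_ofReal hhs.le] at hle
  simpa only [Real.norm_eq_abs] using hle

theorem integral_abs_conv_kernel_sub (x : ℝ) :
    ∫ y, |K (x + h - y) - K (x - y)| = ∫ z, |K (z + h) - K z| := by
  simp_rw [← sub_add_eq_add_sub]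
  exact integral_sub_left_eq_self (fun z => |K (z + h) - K z|) volume x

variable {v : ℝ → ℝ}

theorem conv_add_sub_conv_eq_integral_mul_sub_const (hK : Integrable K) (hv : MemLp v ∞ volume)
    (x k : ℝ) :
    conv K v (x + h) - conv K v x = ∫ y, (K (x + h - y) - K (x - y)) * (v y - k) := by
  have hKv (a : ℝ) : Integrable fun y => K (a - y) * v y :=
    (hK.comp_sub_left a).mul_of_top_left hv
  have hD : Integrable fun y => K (x + h - y) - K (x - y) :=
    (hK.comp_sub_left _).sub (hK.comp_sub_left _)
  have hDv : Integrable fun y => (K (x + h - y) - K (x - y)) * v y := hD.mul_of_top_left hv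
  have hD_zero : ∫ y, (K (x + h - y) - K (x - y)) = 0 := by
    rw [integral_sub (hK.comp_sub_left _) (hK.comp_sub_left _), integral_sub_left_eq_self,
      integral_sub_left_eq_self, sub_self]
  simp_rw [mul_sub]
  rw [integral_sub hDv (hD.mul_const k), integral_mul_const, hD_zero, zero_mul, sub_zero]
  simp_rw [sub_mul]
  exact (integral_sub (hKv _) (hKv _)).symm

theorem conv_add_sub_conv_le {s : ℝ} (hK : Integrable K) (hfin : fracTV K s ≠ ⊤)
    (hv : MemLp v ∞ volume) (hh : 0 < h) (x : ℝ) :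
    conv K v (x + h) - conv K v x
      ≤ (fracTV K s).toReal * ((essSup v volume - essInf v volume) / 2) * h ^ s := by
  set k := (essSup v volume + essInf v volume) / 2
  set M := (essSup v volume - essInf v volume) / 2
  have hvM := hv.ae_abs_sub_midpoint_le
  have hM : 0 ≤ M := let ⟨_, hy⟩ := hvM.exists; (abs_nonneg _).trans hy
  have hD : Integrable fun y => K (x + h - y) - K (x - y) :=
    (hK.comp_sub_left _).sub (hK.comp_sub_left _)
  calc conv K v (x + h) - conv K v x
      = ∫ y, (K (x + h - y) - K (x - y)) * (v y - k) :=
        conv_add_sub_conv_eq_integral_mul_sub_const hK hv x k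
    _ ≤ |∫ y, (K (x + h - y) - K (x - y)) * (v y - k)| :=
        le_abs_self _
    _ ≤ (∫ z, |K (z + h) - K z|) * M := by
        rw [← integral_abs_conv_kernel_sub x]
        exact abs_integral_mul_le_integral_abs_mul hD hvM
    _ ≤ (fracTV K s).toReal * h ^ s * M :=
        mul_le_mul_of_nonneg_right (integral_abs_translate_sub_le_fracTV hK hfin hh) hM
    _ = (fracTV K s).toReal * M * h ^ s := by ring

end Translates

theorem modulus_of_growth_after_dispersive_step_general (s : ℝ)
    (K : ℝ → ℝ) (hK : Integrable K) (hfin : fracTV K s ≠ ⊤)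
    (v : ℝ → ℝ) (hv : MemLp v ⊤ volume)
    (ω : ℝ → ℝ)
    (hgrowth : ∀ h > 0, ∀ᵐ x ∂(volume : Measure ℝ), v (x + h) - v x ≤ ω h)
    (ε : ℝ) (hε : 0 < ε) :
    ∀ h > 0, ∀ᵐ x ∂(volume : Measure ℝ),
      (v (x + h) + ε * conv K v (x + h)) - (v x + ε * conv K v x)
        ≤ ω h + ε * (fracTV K s).toReal
            * ((essSup v volume - essInf v volume) / 2) * h ^ s := by
  intro h hh
  filter_upwards [hgrowth h hh] with x hx
  have hconv := mul_le_mul_of_nonneg_left (conv_add_sub_conv_le hK hfin hv hh x) hε.le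
  linarith

theorem modulus_of_growth_after_dispersive_step (s : ℝ) (hs : s ∈ Set.Icc (0:ℝ) 1)
    (K : ℝ → ℝ) (hK : Integrable K) (hfin : fracTV K s ≠ ⊤)
    (v : ℝ → ℝ) (hv : MemLp v ⊤ volume)
    (ω : ℝ → ℝ) (hmono : StrictMonoOn ω (Set.Ioi 0)) (hpos : ∀ h > 0, 0 < ω h)
    (hgrowth : ∀ h > 0, ∀ᵐ x ∂(volume : Measure ℝ), v (x + h) - v x ≤ ω h)
    (ε : ℝ) (hε : 0 < ε) :
    ∀ h > 0, ∀ᵐ x ∂(volume : Measure ℝ),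
      (v (x + h) + ε * conv K v (x + h)) - (v x + ε * conv K v x)
        ≤ ω h + ε * (fracTV K s).toReal
            * ((essSup v volume - essInf v volume) / 2) * h ^ s :=
  modulus_of_growth_after_dispersive_step_general s K hK hfin v hv ω hgrowth ε hε
end

section
/- Let α ∈ (1,2) and let K be a function on ℝ that is positive and strictly increasing on (−∞,0), negative and strictly increasing on (0,∞), and odd, with ∫_{−h}^0 K(x) dx ≤ C h^{α−1} for all h > 0 and some constant C. Then for every h > 0, ‖K(·+h) − K‖_{L¹(ℝ)} = 4 ∫_{−h}^0 K(x) dx ≤ 4C h^{α−1}; consequently |K|_{TV^s} < ∞ for all s ∈ [0, α−1]. -/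
/-!
On each half-line `K` is increasing, so `K (· + h) - K` is nonnegative off `[-h, 0]`, while on
`[-h, 0]` it is nonpositive by the sign conditions. Its integral vanishes by translation
invariance, so its `L¹` norm is `-2 ∫_{[-h,0]} (K (· + h) - K)`, which oddness turns into
`4 ∫_{-h}^0 K`. In the seminorm, small `h` are then controlled by `C h^(α-1) ≤ C h^s` and large `h`
by `2 ‖K‖₁ ≤ 2 ‖K‖₁ h^s`.
-/

open MeasureTheory Real
open scoped ENNReal

lemma integral_abs_eq_neg_two_mul_setIntegral {X : Type*} [MeasurableSpace X] {μ : Measure X}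
    {g : X → ℝ} (hg : Integrable g μ) (hg0 : ∫ x, g x ∂μ = 0) {S : Set X} (hS : MeasurableSet S)
    (hneg : ∀ x ∈ S, g x ≤ 0) (hpos : ∀ x ∉ S, 0 ≤ g x) :
    ∫ x, |g x| ∂μ = -2 * ∫ x in S, g x ∂μ := by
  have hS' : ∫ x in S, |g x| ∂μ = -∫ x in S, g x ∂μ := by
    rw [← integral_neg]
    exact setIntegral_congr_fun hS fun x hx => abs_of_nonpos (hneg x hx)
  have hSc : ∫ x in Sᶜ, |g x| ∂μ = ∫ x in Sᶜ, g x ∂μ :=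
    setIntegral_congr_fun hS.compl fun x hx => abs_of_nonneg (hpos x hx)
  have hsplit := integral_add_compl hS hg
  rw [← integral_add_compl hS hg.abs, hS', hSc]
  linarith

lemma integral_eq_neg_integral_neg_of_odd {f : ℝ → ℝ} (hodd : ∀ x, f (-x) = -f x) (a b : ℝ) :
    ∫ x in a..b, f x = -∫ x in -b..-a, f x := by
  simp [← intervalIntegral.integral_comp_neg, hodd]

lemma eLpNorm_one_eq_ofReal_integral_abs {X : Type*} [MeasurableSpace X] {μ : Measure X}
    {g : X → ℝ} (hg : Integrable g μ) :
    eLpNorm g 1 μ = ENNReal.ofReal (∫ x, |g x| ∂μ) := by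
  simp only [eLpNorm_one_eq_lintegral_enorm, ← ofReal_integral_norm_eq_lintegral_enorm hg,
    Real.norm_eq_abs]

lemma eLpNorm_comp_add_right_sub_le (K : ℝ → ℝ) (hK : AEStronglyMeasurable K) (h : ℝ) :
    eLpNorm (fun x => K (x + h) - K x) 1 volume ≤ 2 * eLpNorm K 1 volume := by
  have hshift : eLpNorm (fun x => K (x + h)) 1 volume = eLpNorm K 1 volume :=
    eLpNorm_comp_measurePreserving hK (measurePreserving_add_right volume h)
  calc eLpNorm (fun x => K (x + h) - K x) 1 volume
      ≤ eLpNorm (fun x => K (x + h)) 1 volume + eLpNorm K 1 volume :=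
        eLpNorm_sub_le (hK.comp_measurePreserving (measurePreserving_add_right volume h)) hK le_rfl
    _ = 2 * eLpNorm K 1 volume := by rw [hshift, two_mul]

section ShiftedDifferenceSign

variable {K : ℝ → ℝ} {h : ℝ}

lemma apply_add_sub_nonpos_of_mem_Icc (hK0 : K 0 = 0) (hneg_pos : ∀ x < (0:ℝ), 0 < K x)
    (hpos_neg : ∀ x > (0:ℝ), K x < 0) {x : ℝ} (hx : x ∈ Set.Icc (-h) 0) :
    K (x + h) - K x ≤ 0 := by
  have hKx : 0 ≤ K x := by
    rcases hx.2.lt_or_eq with hlt | rfl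
    · exact (hneg_pos x hlt).le
    · exact hK0.ge
  have hKxh : K (x + h) ≤ 0 := by
    rcases (neg_le_iff_add_nonneg.mp hx.1).lt_or_eq with hlt | heq
    · exact (hpos_neg _ hlt).le
    · rw [← heq, hK0]
  linarith

lemma apply_add_sub_nonneg_of_notMem_Icc (hmono1 : MonotoneOn K (Set.Iio 0))
    (hmono2 : MonotoneOn K (Set.Ioi 0)) (hh : 0 ≤ h) {x : ℝ} (hx : x ∉ Set.Icc (-h) 0) :
    0 ≤ K (x + h) - K x := by
  rw [sub_nonneg]
  rcases not_and_or.mp hx with hx | hx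
  · exact hmono1 (by simp only [Set.mem_Iio]; linarith) (by simp only [Set.mem_Iio]; linarith)
      (by linarith)
  · exact hmono2 (by simp only [Set.mem_Ioi]; linarith) (by simp only [Set.mem_Ioi]; linarith)
      (by linarith)

end ShiftedDifferenceSign

lemma integral_abs_comp_add_right_sub_eq (K : ℝ → ℝ) (hK : Integrable K)
    (hodd : ∀ x, K (-x) = -K x)
    (hneg_pos : ∀ x < (0:ℝ), 0 < K x) (hpos_neg : ∀ x > (0:ℝ), K x < 0)
    (hmono1 : MonotoneOn K (Set.Iio 0)) (hmono2 : MonotoneOn K (Set.Ioi 0)) {h : ℝ} (hh : 0 ≤ h) :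
    ∫ x, |K (x + h) - K x| = 4 * ∫ x in (-h)..0, K x := by
  have hK0 : K 0 = 0 := by simpa [self_eq_neg] using hodd 0
  have hKh : Integrable fun x => K (x + h) := hK.comp_add_right h
  have hmean : ∫ x, (K (x + h) - K x) = 0 := by
    rw [integral_sub hKh hK, integral_add_right_eq_self K h, sub_self]
  have hIcc : ∫ x in Set.Icc (-h) 0, (K (x + h) - K x) = -2 * ∫ x in (-h)..0, K x := by
    rw [integral_Icc_eq_integral_Ioc, ← intervalIntegral.integral_of_le (by linarith),
      intervalIntegral.integral_sub hKh.intervalIntegrable hK.intervalIntegrable,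
      intervalIntegral.integral_comp_add_right K h, neg_add_cancel, zero_add,
      integral_eq_neg_integral_neg_of_odd hodd, neg_zero]
    ring
  rw [integral_abs_eq_neg_two_mul_setIntegral (g := fun x => K (x + h) - K x) (hKh.sub hK) hmean
    measurableSet_Icc
    (fun x hx => apply_add_sub_nonpos_of_mem_Icc hK0 hneg_pos hpos_neg hx)
    (fun x hx => apply_add_sub_nonneg_of_notMem_Icc hmono1 hmono2 hh hx), hIcc]
  ring

lemma fracTV_lt_top_of_integral_abs_comp_add_right_sub_le {K : ℝ → ℝ} (hK : Integrable K)
    {M β : ℝ} (hbound : ∀ h > (0:ℝ), ∫ x, |K (x + h) - K x| ≤ M * h ^ β) {s : ℝ}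
    (hs : s ∈ Set.Icc 0 β) : fracTV K s < ⊤ := by
  have hM : 0 ≤ M := by
    simpa using (integral_nonneg fun x => abs_nonneg (K (x + 1) - K x)).trans (hbound 1 one_pos)
  suffices ∀ h > (0:ℝ), eLpNorm (fun x => K (x + h) - K x) 1 volume ≤
      max (ENNReal.ofReal M) (2 * eLpNorm K 1 volume) * ENNReal.ofReal (h ^ s) from
    (iSup₂_le fun h hh => ENNReal.div_le_of_le_mul (this h hh)).trans_lt
      (max_lt ENNReal.ofReal_lt_top
        (ENNReal.mul_lt_top (by simp) (memLp_one_iff_integrable.mpr hK).eLpNorm_lt_top))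
  intro h hh
  rcases le_or_gt h 1 with hle | hgt
  · have hpow : h ^ β ≤ h ^ s := Real.rpow_le_rpow_of_exponent_ge hh hle hs.2
    calc eLpNorm (fun x => K (x + h) - K x) 1 volume
        = ENNReal.ofReal (∫ x, |K (x + h) - K x|) :=
          eLpNorm_one_eq_ofReal_integral_abs ((hK.comp_add_right h).sub hK)
      _ ≤ ENNReal.ofReal (M * h ^ s) :=
          ENNReal.ofReal_le_ofReal ((hbound h hh).trans (mul_le_mul_of_nonneg_left hpow hM))
      _ = ENNReal.ofReal M * ENNReal.ofReal (h ^ s) := ENNReal.ofReal_mul hM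
      _ ≤ _ := by gcongr; exact le_max_left _ _
  · have hpow : (1 : ℝ≥0∞) ≤ ENNReal.ofReal (h ^ s) :=
      ENNReal.one_le_ofReal.mpr (Real.one_le_rpow hgt.le hs.1)
    calc eLpNorm (fun x => K (x + h) - K x) 1 volume
        ≤ 2 * eLpNorm K 1 volume := eLpNorm_comp_add_right_sub_le K hK.1 h
      _ ≤ max (ENNReal.ofReal M) (2 * eLpNorm K 1 volume) := le_max_right _ _
      _ ≤ _ := le_mul_of_one_le_right' hpow

theorem fracTV_finite_of_monotone_odd_kernel_general (α : ℝ)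
    (K : ℝ → ℝ) (hK : Integrable K) (hodd : ∀ x, K (-x) = -K x)
    (hneg_pos : ∀ x < (0:ℝ), 0 < K x) (hpos_neg : ∀ x > (0:ℝ), K x < 0)
    (hmono1 : StrictMonoOn K (Set.Iio 0)) (hmono2 : StrictMonoOn K (Set.Ioi 0))
    (C : ℝ) (hC : ∀ h > (0:ℝ), (∫ x in (-h)..(0:ℝ), K x) ≤ C * h ^ (α - 1)) :
    (∀ h > (0:ℝ),
      (∫ x : ℝ, |K (x + h) - K x|) = 4 * ∫ x in (-h)..(0:ℝ), K x ∧
      (∫ x : ℝ, |K (x + h) - K x|) ≤ 4 * C * h ^ (α - 1)) ∧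
    (∀ s ∈ Set.Icc (0:ℝ) (α - 1), fracTV K s < ⊤) := by
  have hL1 : ∀ h > (0:ℝ), (∫ x : ℝ, |K (x + h) - K x|) = 4 * ∫ x in (-h)..(0:ℝ), K x :=
    fun h hh => integral_abs_comp_add_right_sub_eq K hK hodd hneg_pos hpos_neg
      hmono1.monotoneOn hmono2.monotoneOn hh.le
  have hbound : ∀ h > (0:ℝ), (∫ x : ℝ, |K (x + h) - K x|) ≤ 4 * C * h ^ (α - 1) := fun h hh => by
    rw [hL1 h hh]; linarith [hC h hh]
  exact ⟨fun h hh => ⟨hL1 h hh, hbound h hh⟩,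
    fun s hs => fracTV_lt_top_of_integral_abs_comp_add_right_sub_le hK hbound hs⟩

theorem fracTV_finite_of_monotone_odd_kernel (α : ℝ) (hα : α ∈ Set.Ioo (1:ℝ) 2)
    (K : ℝ → ℝ) (hK : Integrable K) (hodd : ∀ x, K (-x) = -K x)
    (hneg_pos : ∀ x < (0:ℝ), 0 < K x) (hpos_neg : ∀ x > (0:ℝ), K x < 0)
    (hmono1 : StrictMonoOn K (Set.Iio 0)) (hmono2 : StrictMonoOn K (Set.Ioi 0))
    (C : ℝ) (hC : ∀ h > (0:ℝ), (∫ x in (-h)..(0:ℝ), K x) ≤ C * h ^ (α - 1)) :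
    (∀ h > (0:ℝ),
      (∫ x : ℝ, |K (x + h) - K x|) = 4 * ∫ x in (-h)..(0:ℝ), K x ∧
      (∫ x : ℝ, |K (x + h) - K x|) ≤ 4 * C * h ^ (α - 1)) ∧
    (∀ s ∈ Set.Icc (0:ℝ) (α - 1), fracTV K s < ⊤) :=
  fracTV_finite_of_monotone_odd_kernel_general α K hK hodd hneg_pos hpos_neg hmono1 hmono2 C hC
end
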